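/- Let Q be a non-degenerate symmetric bilinear form on an n-dimensional real vector space V, E ⊆ V a k-dimensional subspace, E₀ := E ∩ E^Q, and r := dim E₀. Let π_E : so(Q) → Hom(E, V/E) be the map sending A to the composition E ↪ V → V → V/E of A with inclusion and projection. Then the image of π_E equals { T ∈ Hom(E, V/E) : Q(Tx, x) = 0 for all x ∈ E₀ } and has dimension k(n−k) − r(r+1)/2. -/

import Mathlib

/-!
`A ∈ so(Q)` exactly when `ω(u, v) = Q(Au, v)` is alternating, and since `(E^Q)^Q = E`,
`π_E A = T` exactly when `ω(x, w) = Q(T̃x, w)` for `x ∈ E`, `w ∈ E^Q`, where `T̃ : E → V` lifts `T`.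
A bilinear map on `E × E^Q` extends to an alternating form on `V` as soon as it is alternating
on `E₀ = E ∩ E^Q`, so the image of `π_E` consists of the `T` for which `(a, b) ↦ Q(Ta, b)` is
alternating on `E₀`. By nondegeneracy every bilinear form on `E₀` arises from some `T`, so the
image is cut out by the vanishing of the `r(r+1)/2` coordinates of the symmetrisation of this
form.
-/

open Module

/-- The Lie algebra `so(Q)` as a submodule of endomorphisms. -/
def soQ {V : Type*} [AddCommGroup V] [Module ℝ V] (Q : LinearMap.BilinForm ℝ V) :
    Submodule ℝ (V →ₗ[ℝ] V) where
  carrier := {A | ∀ v w : V, Q (A v) w + Q v (A w) = 0}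
  add_mem' := by
    intro a b ha hb v w
    have h1 := ha v w
    have h2 := hb v w
    simp only [LinearMap.add_apply, map_add] at *
    linarith
  zero_mem' := by intro v w; simp
  smul_mem' := by
    intro c a ha v w
    have h := ha v w
    simp only [LinearMap.smul_apply, map_smul, smul_eq_mul]
    linear_combination c * h

/-- The natural projection `End(V) → Hom(E, V/E)`, `A ↦ mkQ ∘ A ∘ incl`. -/
def piE {V : Type*} [AddCommGroup V] [Module ℝ V] (E : Submodule ℝ V) :
    (V →ₗ[ℝ] V) →ₗ[ℝ] (↥E →ₗ[ℝ] V ⧸ E) where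
  toFun A := E.mkQ ∘ₗ A ∘ₗ E.subtype
  map_add' := by intro a b; ext x; simp
  map_smul' := by intro c a; ext x; simp

open LinearMap (BilinForm)

section Extension

variable {K V : Type*} [Field K] [AddCommGroup V] [Module K V]

theorem Submodule.exists_retraction_mapsTo (E O : Submodule K V) :
    ∃ P : V →ₗ[K] E, (∀ x : E, P x = x) ∧ ∀ w ∈ O, (P w : V) ∈ O := by
  obtain ⟨F, hEOF, hsup⟩ :=
    IsModularLattice.exists_disjoint_and_sup_eq (inf_le_right : E ⊓ O ≤ O)
  have hFO : F ≤ O := hsup ▸ le_sup_right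
  have hEF : Disjoint E F := by
    rw [disjoint_iff, ← inf_eq_right.mpr hFO, ← inf_assoc]
    exact hEOF.eq_bot
  obtain ⟨G, hFG, hG⟩ := hEF.symm.exists_isCompl
  refine ⟨E.projectionOnto G hG.symm, E.projectionOnto_apply_left hG.symm, fun w hw ↦ ?_⟩
  rw [← hsup] at hw
  obtain ⟨a, ha, f, hf, rfl⟩ := Submodule.mem_sup.mp hw
  have hf0 : E.projectionOnto G hG.symm f = 0 :=
    E.projectionOnto_apply_right hG.symm ⟨f, hFG hf⟩
  rw [map_add, hf0, add_zero, E.projectionOnto_apply_left hG.symm ⟨a, ha.1⟩]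
  exact ha.2

/-- With retractions `P` onto `E` and `R` onto `O` such that `P O ⊆ E ∩ O` and `R E ⊆ E ∩ O`,
the form `β(Pu, Rv) - β(Pv, Ru) + β(PRv, PRu)` works: its diagonal is `β(PRu, PRu)` with
`PRu ∈ E ∩ O`, and on `E × O` the last two terms cancel because `PRx = Rx`. -/
theorem exists_isAlt_eq_on (E O : Submodule K V) (β : E →ₗ[K] V →ₗ[K] K)
    (hβ : ∀ x : E, (x : V) ∈ O → β x x = 0) :
    ∃ ω : LinearMap.BilinForm K V, ω.IsAlt ∧ ∀ (x : E), ∀ w ∈ O, ω x w = β x w := by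
  obtain ⟨P, hPE, hPO⟩ := E.exists_retraction_mapsTo O
  obtain ⟨R, hRO, hRE⟩ := O.exists_retraction_mapsTo E
  let ρ : V →ₗ[K] V := O.subtype ∘ₗ R
  let f : LinearMap.BilinForm K V := β ∘ₗ P
  refine ⟨f.compl₂ ρ - (f.compl₂ ρ).flip + ((f ∘ₗ ρ).compl₂ (E.subtype ∘ₗ P ∘ₗ ρ)).flip, ?_, ?_⟩
  · intro u
    simpa [f, ρ] using hβ (P (ρ u)) (hPO _ (R u).2)
  · intro x w hw
    have hRx : P (ρ x) = ⟨ρ x, hRE x x.2⟩ := hPE ⟨ρ x, hRE x x.2⟩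
    have hRw : ρ w = w := congrArg Subtype.val (hRO ⟨w, hw⟩)
    simp [f, hRx, hRw, hPE]

end Extension

namespace LinearMap.BilinForm

section Pairing

variable {R V : Type*} [CommRing R] [AddCommGroup V] [Module R V]

def quotPairing (Q : BilinForm R V) (E F : Submodule R V) (hF : F ≤ Q.orthogonal E) :
    V ⧸ E →ₗ[R] F →ₗ[R] R :=
  E.liftQ (Q.compl₂ F.subtype) fun y hy ↦ by
    ext x
    exact mem_orthogonal_iff.mp (hF x.2) y hy

/-- `T ↦ ((a, b) ↦ Q(Ta, b))` on `E₀ = E ∩ E^Q`; this is well defined because `E₀ ⊥ E`. -/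
def radicalPairing (Q : BilinForm R V) (E : Submodule R V) :
    (E →ₗ[R] V ⧸ E) →ₗ[R] BilinForm R ↥(E ⊓ Q.orthogonal E) :=
  lcomp R _ (Submodule.inclusion inf_le_left) ∘ₗ llcomp R _ _ _ (Q.quotPairing E _ inf_le_right)

theorem radicalPairing_apply_of_mkQ_eq (Q : BilinForm R V) (E : Submodule R V)
    {T : E →ₗ[R] V ⧸ E} {a : ↥(E ⊓ Q.orthogonal E)} {y : V}
    (hy : E.mkQ y = T (Submodule.inclusion inf_le_left a)) (b : ↥(E ⊓ Q.orthogonal E)) :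
    Q.radicalPairing E T a b = Q y b := by
  change Q.quotPairing E _ inf_le_right (T (Submodule.inclusion inf_le_left a)) b = _
  rw [← hy]
  rfl

theorem isAlt_radicalPairing_iff (Q : BilinForm R V) (E : Submodule R V) (T : E →ₗ[R] V ⧸ E) :
    (Q.radicalPairing E T).IsAlt ↔ ∀ (x : V) (hx : x ∈ E), x ∈ Q.orthogonal E →
      ∀ y : V, E.mkQ y = T ⟨x, hx⟩ → Q y x = 0 := by
  refine ⟨fun hT x hx hxO y hy ↦ ?_, fun hT a ↦ ?_⟩
  · exact Q.radicalPairing_apply_of_mkQ_eq E (a := ⟨x, hx, hxO⟩) hy ⟨x, hx, hxO⟩ ▸ hT _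
  · obtain ⟨y, hy⟩ := E.mkQ_surjective (T (Submodule.inclusion inf_le_left a))
    exact (Q.radicalPairing_apply_of_mkQ_eq E hy a).trans <| hT a a.2.1 a.2.2 y hy

end Pairing

section Nondegenerate

variable {K V : Type*} [Field K] [AddCommGroup V] [Module K V] [FiniteDimensional K V]
  {Q : BilinForm K V}

theorem quotPairing_surjective (hQ : Q.Nondegenerate) (E F : Submodule K V)
    (hF : F ≤ Q.orthogonal E) : Function.Surjective (Q.quotPairing E F hF) := by
  have h : Q.quotPairing E F hF ∘ E.mkQ = F.subtype.dualMap ∘ Q.toDual hQ := rfl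
  refine Function.Surjective.of_comp (g := E.mkQ) ?_
  rw [h]
  exact (dualMap_surjective_of_injective F.injective_subtype).comp (Q.toDual hQ).surjective

theorem radicalPairing_surjective (hQ : Q.Nondegenerate) (E : Submodule K V) :
    Function.Surjective (Q.radicalPairing E) := by
  intro B
  obtain ⟨s, hs⟩ := (Q.quotPairing E (E ⊓ Q.orthogonal E) inf_le_right)
    |>.exists_rightInverse_of_surjective
      (range_eq_top.mpr (quotPairing_surjective hQ E _ inf_le_right))
  obtain ⟨l, hl⟩ := (Submodule.inclusion (inf_le_left : E ⊓ Q.orthogonal E ≤ E))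
    |>.exists_leftInverse_of_injective (ker_eq_bot.mpr (Submodule.inclusion_injective _))
  refine ⟨s ∘ₗ B ∘ₗ l, ?_⟩
  ext a b
  change (Q.quotPairing E _ inf_le_right ∘ₗ s) (B ((l ∘ₗ Submodule.inclusion inf_le_left) a)) b
    = B a b
  rw [hs, hl]
  rfl

end Nondegenerate

end LinearMap.BilinForm

section SkewAdjoint

open LinearMap.BilinForm

variable {V : Type*} [AddCommGroup V] [Module ℝ V] [FiniteDimensional ℝ V]
  {Q : BilinForm ℝ V}

theorem exists_mem_soQ_of_isAlt (hQsymm : ∀ u v : V, Q u v = Q v u) (hQnd : Q.Nondegenerate)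
    {ω : BilinForm ℝ V} (hω : ω.IsAlt) : ∃ A ∈ soQ Q, ∀ u v, Q (A u) v = ω u v := by
  let A : V →ₗ[ℝ] V := (Q.toDual hQnd).symm.toLinearMap ∘ₗ ω
  have hA : ∀ u v, Q (A u) v = ω u v := fun u v ↦ apply_toDual_symm_apply (hB := hQnd) (ω u) v
  refine ⟨A, fun v w ↦ ?_, hA⟩
  rw [hQsymm v, hA, hA, ← LinearMap.IsAlt.neg hω, neg_add_cancel]

theorem mem_map_piE_soQ_iff (hQsymm : ∀ u v : V, Q u v = Q v u) (hQnd : Q.Nondegenerate)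
    (E : Submodule ℝ V) (T : E →ₗ[ℝ] V ⧸ E) :
    T ∈ (soQ Q).map (piE E) ↔ (Q.radicalPairing E T).IsAlt := by
  constructor
  · rintro ⟨A, hA, rfl⟩ a
    have hskew := hA a a
    rw [hQsymm a] at hskew
    rw [Q.radicalPairing_apply_of_mkQ_eq E (y := A a) rfl]
    linarith
  · intro hT
    obtain ⟨L, hL⟩ := Module.projective_lifting_property E.mkQ T E.mkQ_surjective
    have hLT : ∀ x : E, E.mkQ (L x) = T x := fun x ↦ LinearMap.congr_fun hL x
    obtain ⟨ω, hω, hωL⟩ := exists_isAlt_eq_on E (Q.orthogonal E) (Q ∘ₗ L) fun x hx ↦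
      (Q.radicalPairing_apply_of_mkQ_eq E (a := ⟨x, x.2, hx⟩) (hLT x) ⟨x, x.2, hx⟩).symm.trans
        (hT _)
    obtain ⟨A, hA, hAω⟩ := exists_mem_soQ_of_isAlt hQsymm hQnd hω
    refine ⟨A, hA, LinearMap.ext fun x ↦ ?_⟩
    have hperp : A x - L x ∈ Q.orthogonal (Q.orthogonal E) := mem_orthogonal_iff.mpr fun w hw ↦ by
      rw [hQsymm, map_sub, LinearMap.sub_apply, hAω, hωL x w hw, LinearMap.comp_apply, sub_self]
    rw [orthogonal_orthogonal hQnd (fun u v h ↦ by rwa [hQsymm]) E] at hperp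
    rw [← hLT]
    exact (Submodule.Quotient.eq E).mpr hperp

end SkewAdjoint

section SymmCoord

variable {K W ι : Type*} [Field K] [AddCommGroup W] [Module K W]

noncomputable def symmCoord (e : Basis ι K W) : BilinForm K W →ₗ[K] (Sym2 ι → K) where
  toFun B := Sym2.lift ⟨fun i j ↦ B (e i) (e j) + B (e j) (e i), fun _ _ ↦ add_comm _ _⟩
  map_add' B B' := by
    ext z
    induction z
    simp only [Sym2.lift_mk, LinearMap.add_apply, Pi.add_apply]
    ring
  map_smul' c B := by
    ext z
    induction z
    simp only [Sym2.lift_mk, LinearMap.smul_apply, smul_eq_mul, RingHom.id_apply, Pi.smul_apply]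
    ring

@[simp]
theorem symmCoord_mk (e : Basis ι K W) (B : BilinForm K W) (i j : ι) :
    symmCoord e B s(i, j) = B (e i) (e j) + B (e j) (e i) :=
  rfl

theorem symmCoord_eq_zero_iff [CharZero K] (e : Basis ι K W) (B : BilinForm K W) :
    symmCoord e B = 0 ↔ B.IsAlt := by
  constructor
  · intro h x
    have hsymm : B + B.flip = 0 :=
      LinearMap.ext_basis e e fun i j ↦ by simpa using congrFun h s(i, j)
    have hx := LinearMap.congr_fun₂ hsymm x x
    simp only [LinearMap.add_apply, LinearMap.zero_apply] at hx
    exact add_self_eq_zero.mp hx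
  · intro h
    ext z
    induction z with
    | h i j => simp [← LinearMap.IsAlt.neg h (e i) (e j)]

theorem symmCoord_surjective [CharZero K] [Fintype ι] [DecidableEq ι] (e : Basis ι K W) :
    Function.Surjective (symmCoord e) := by
  intro f
  refine ⟨Matrix.toLinearMap₂ e e (Matrix.of fun i j ↦ f s(i, j) / 2), ?_⟩
  ext z
  induction z with
  | h i j =>
    rw [symmCoord_mk, Matrix.toLinearMap₂_apply_basis, Matrix.toLinearMap₂_apply_basis,
      Matrix.of_apply, Matrix.of_apply, Sym2.eq_swap]
    ring

theorem finrank_ker_symmCoord_comp_add_card [CharZero K] [Fintype ι] [DecidableEq ι]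
    {M : Type*} [AddCommGroup M] [Module K M] [FiniteDimensional K M] (e : Basis ι K W)
    {Φ : M →ₗ[K] BilinForm K W} (hΦ : Function.Surjective Φ) :
    finrank K (LinearMap.ker (symmCoord e ∘ₗ Φ)) + Fintype.card (Sym2 ι) = finrank K M := by
  rw [← (symmCoord e ∘ₗ Φ).finrank_range_add_finrank_ker,
    LinearMap.range_eq_top.mpr (by
      rw [LinearMap.coe_comp]; exact (symmCoord_surjective e).comp hΦ), finrank_top,
    Module.finrank_fintype_fun_eq_card, add_comm]

end SymmCoord

/-- The image of `π_E : so(Q) → Hom(E, V/E)` equals the set of maps `T` with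
`Q(Tx,x) = 0` for all `x ∈ E₀ = E ∩ E^Q`, and has dimension `k(n−k) − r(r+1)/2`. -/
theorem stmt_9 {V : Type*} [AddCommGroup V] [Module ℝ V] [FiniteDimensional ℝ V]
    (Q : LinearMap.BilinForm ℝ V)
    (hQsymm : ∀ u v : V, Q u v = Q v u)
    (hQnd : LinearMap.BilinForm.Nondegenerate Q)
    (n k r : ℕ) (hn : finrank ℝ V = n)
    (E : Submodule ℝ V) (hk : finrank ℝ E = k)
    (hr : finrank ℝ ↥(E ⊓ LinearMap.BilinForm.orthogonal Q E) = r) :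
    ((Submodule.map (piE E) (soQ Q) : Submodule ℝ (↥E →ₗ[ℝ] V ⧸ E)) : Set (↥E →ₗ[ℝ] V ⧸ E)) =
      {T | ∀ (x : V) (hx : x ∈ E), x ∈ LinearMap.BilinForm.orthogonal Q E →
        ∀ y : V, E.mkQ y = T ⟨x, hx⟩ → Q y x = 0} ∧
    finrank ℝ ↥(Submodule.map (piE E) (soQ Q)) = k * (n - k) - r * (r + 1) / 2 := by
  let e : Basis (Fin r) ℝ ↥(E ⊓ Q.orthogonal E) := Module.finBasisOfFinrankEq ℝ _ hr
  have himage : (soQ Q).map (piE E) = LinearMap.ker (symmCoord e ∘ₗ Q.radicalPairing E) := by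
    ext T
    rw [mem_map_piE_soQ_iff hQsymm hQnd, LinearMap.mem_ker, LinearMap.comp_apply,
      symmCoord_eq_zero_iff]
  have hHom : finrank ℝ (E →ₗ[ℝ] V ⧸ E) = k * (n - k) := by
    rw [finrank_linearMap, hk, ← hn, ← E.finrank_quotient_add_finrank, hk, Nat.add_sub_cancel]
  have hSym2 : Fintype.card (Sym2 (Fin r)) = r * (r + 1) / 2 := by
    rw [Sym2.card, Fintype.card_fin, Nat.choose_two_right, Nat.add_sub_cancel, mul_comm]
  have hdim := finrank_ker_symmCoord_comp_add_card e
    (LinearMap.BilinForm.radicalPairing_surjective hQnd E)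
  rw [himage]
  refine ⟨Set.ext fun T ↦ (symmCoord_eq_zero_iff e _).trans (Q.isAlt_radicalPairing_iff E T), ?_⟩
  omega
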